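/- Let (X,Y) be a random vector on ℝ² whose law has a jointly continuous, strictly positive probability density function. Suppose that for every point (p,q) ∈ (0,1)² there exists ε > 0 such that Cov_A[X,Y] = 0 for all quantile splits p₁, q₁ ∈ (p − ε, p + ε) with p₁ < q₁ and p₂, q₂ ∈ (q − ε, q + ε) with p₂ < q₂ (intersected with (0,1)), where A is the corresponding quantile set. Then X and Y are independent. In other words, local linear independence implies independence. -/

import Mathlib

open MeasureTheory ProbabilityTheory Set

/-- Conditional covariance of `X` and `Y` given the event `A`:
`Cov_A[X,Y] = E[X·Y | A] − E[X | A] · E[Y | A]`, where `E[· | A]` is the expectation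
with respect to the conditional probability `P[|A]`. -/
noncomputable def condCov {Ω : Type*} [MeasurableSpace Ω] (P : Measure Ω) (A : Set Ω)
    (X Y : Ω → ℝ) : ℝ :=
  (∫ ω, X ω * Y ω ∂(P[|A])) - (∫ ω, X ω ∂(P[|A])) * (∫ ω, Y ω ∂(P[|A]))

/-- The cumulative distribution function of a real random variable `X` under `P`. -/
noncomputable def cdfOf {Ω : Type*} [MeasurableSpace Ω] (P : Measure Ω) (X : Ω → ℝ) : ℝ → ℝ :=
  fun x => (P {ω | X ω ≤ x}).toReal

/-- The quantile function of `X` under `P`, i.e. the inverse of its CDF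
(well defined on `(0,1)` when the CDF is a bijection onto `(0,1)`). -/
noncomputable def quantileOf {Ω : Type*} [MeasurableSpace Ω] (P : Measure Ω) (X : Ω → ℝ) : ℝ → ℝ :=
  Function.invFun (cdfOf P X)

/-- The quantile set `A = {Q_X(p₁) ≤ X ≤ Q_X(q₁)} ∩ {Q_Y(p₂) ≤ Y ≤ Q_Y(q₂)}`
associated with the quantile splits `p₁ < q₁` and `p₂ < q₂`. -/
noncomputable def quantileSet {Ω : Type*} [MeasurableSpace Ω] (P : Measure Ω) (X Y : Ω → ℝ)
    (p₁ q₁ p₂ q₂ : ℝ) : Set Ω :=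
  {ω | quantileOf P X p₁ ≤ X ω ∧ X ω ≤ quantileOf P X q₁} ∩
    {ω | quantileOf P Y p₂ ≤ Y ω ∧ Y ω ≤ quantileOf P Y q₂}

open Filter Topology
open scoped ENNReal

/-!
Since the marginal densities are positive and continuous, the CDFs `F_X`, `F_Y` are increasing
homeomorphisms onto `(0,1)` and the quantile set of `(F_X s, F_X t, F_Y a, F_Y b)` is the event
`(X,Y) ∈ [s,t] × [a,b]`. So every point of the plane has a neighbourhood on whose boxes the
conditional covariance vanishes, i.e. `∬ f · ∬ xy f = ∬ x f · ∬ y f`. A one-variable fact —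
two continuous functions with the same barycentre on every small interval are proportional —
applied first in `x` and then in `y` turns this into `f(x',y') f(x,y) = f(x,y') f(x',y)` near
every point: `log f` has locally vanishing mixed differences. Connectedness of `ℝ` makes them
vanish everywhere, so `f(x,y) = a(x) b(y)` and the joint law is a product measure.
-/

section MixedDifference

variable {α β G : Type*} [AddCommGroup G]

def mixedDiff (g : α → β → G) (x x' : α) (y y' : β) : G :=
  g x' y' - g x y' - g x' y + g x y

theorem mixedDiff_add_mixedDiff (g : α → β → G) (x x' x'' : α) (y y' : β) :
    mixedDiff g x x' y y' + mixedDiff g x' x'' y y' = mixedDiff g x x'' y y' := by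
  unfold mixedDiff; abel

variable [TopologicalSpace α] [PreconnectedSpace α] [TopologicalSpace β] [PreconnectedSpace β]

theorem mixedDiff_eq_zero_of_locally {g : α → β → G}
    (h : ∀ x₀ y₀, ∃ U ∈ 𝓝 x₀, ∃ V ∈ 𝓝 y₀,
      ∀ x ∈ U, ∀ x' ∈ U, ∀ y ∈ V, ∀ y' ∈ V, mixedDiff g x x' y y' = 0)
    (x x' : α) (y y' : β) : mixedDiff g x x' y y' = 0 := by
  -- Connectedness of `α` carries a neighbourhood of `y₀` on which the mixed differences vanish
  -- from `x` to `x'`; then `y ↦ g x' y - g x y` is locally constant on the connected `β`.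
  have hnear (y₀ : β) : ∃ V ∈ 𝓝 y₀, ∀ y ∈ V, ∀ y' ∈ V, mixedDiff g x x' y y' = 0 := by
    let S : α → Prop := fun x' => ∃ V ∈ 𝓝 y₀, ∀ y ∈ V, ∀ y' ∈ V, mixedDiff g x x' y y' = 0
    have hS : IsLocallyConstant S := by
      refine (IsLocallyConstant.iff_eventually_eq S).2 fun x₁ => ?_
      obtain ⟨U, hU, V, hV, hUV⟩ := h x₁ y₀
      filter_upwards [hU] with x₂ hx₂
      refine propext ⟨fun ⟨W, hW, hW0⟩ => ⟨W ∩ V, inter_mem hW hV, fun y hy y' hy' => ?_⟩,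
        fun ⟨W, hW, hW0⟩ => ⟨W ∩ V, inter_mem hW hV, fun y hy y' hy' => ?_⟩⟩
      · rw [← mixedDiff_add_mixedDiff g x x₂ x₁, hW0 y hy.1 y' hy'.1,
          hUV x₂ hx₂ x₁ (mem_of_mem_nhds hU) y hy.2 y' hy'.2, add_zero]
      · rw [← mixedDiff_add_mixedDiff g x x₁ x₂, hW0 y hy.1 y' hy'.1,
          hUV x₁ (mem_of_mem_nhds hU) x₂ hx₂ y hy.2 y' hy'.2, add_zero]
    have hx : S x := ⟨univ, univ_mem, fun y _ y' _ => by simp [mixedDiff]⟩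
    show S x'
    exact hS.apply_eq_of_preconnectedSpace x x' ▸ hx
  have hconst : IsLocallyConstant fun y => g x' y - g x y := by
    refine (IsLocallyConstant.iff_eventually_eq _).2 fun y₀ => ?_
    obtain ⟨V, hV, hV0⟩ := hnear y₀
    filter_upwards [hV] with y hy
    rw [← sub_eq_zero, ← hV0 y₀ (mem_of_mem_nhds hV) y hy, mixedDiff]
    abel
  have hyy' : g x' y' - g x y' = g x' y - g x y := hconst.apply_eq_of_preconnectedSpace y' y
  rw [mixedDiff, ← sub_eq_zero.2 hyy']
  abel

end MixedDifference

theorem mixedDiff_log_eq_zero_iff {α β : Type*} {f : α × β → ℝ} (hf : ∀ p, 0 < f p)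
    {x x' : α} {y y' : β} :
    mixedDiff (fun x y => Real.log (f (x, y))) x x' y y' = 0 ↔
      f (x', y') * f (x, y) = f (x, y') * f (x', y) := by
  have hlog : mixedDiff (fun x y => Real.log (f (x, y))) x x' y y' =
      Real.log (f (x', y') * f (x, y)) - Real.log (f (x, y') * f (x', y)) := by
    simp only [mixedDiff, Real.log_mul (hf _).ne' (hf _).ne']
    ring
  rw [hlog, sub_eq_zero]
  exact Real.log_injOn_pos.eq_iff (mul_pos (hf _) (hf _)) (mul_pos (hf _) (hf _))

theorem mul_eq_mul_of_locally {α β : Type*} [TopologicalSpace α] [PreconnectedSpace α]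
    [TopologicalSpace β] [PreconnectedSpace β] {f : α × β → ℝ} (hf : ∀ z, 0 < f z)
    (h : ∀ x₀ y₀, ∃ U ∈ 𝓝 x₀, ∃ V ∈ 𝓝 y₀, ∀ x ∈ U, ∀ x' ∈ U, ∀ y ∈ V, ∀ y' ∈ V,
      f (x', y') * f (x, y) = f (x, y') * f (x', y))
    (x x' : α) (y y' : β) : f (x', y') * f (x, y) = f (x, y') * f (x', y) := by
  refine (mixedDiff_log_eq_zero_iff hf).1 (mixedDiff_eq_zero_of_locally (fun x₀ y₀ => ?_) x x' y y')
  obtain ⟨U, hU, V, hV, hUV⟩ := h x₀ y₀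
  exact ⟨U, hU, V, hV, fun x hx x' hx' y hy y' hy' =>
    (mixedDiff_log_eq_zero_iff hf).2 (hUV x hx x' hx' y hy y' hy')⟩

section Barycenter

variable {g₁ g₂ : ℝ → ℝ}

theorem hasDerivAt_cross_moment (h₁ : Continuous g₁) (h₂ : Continuous g₂) (a b : ℝ) :
    HasDerivAt (fun u => (∫ x in a..u, x * g₁ x) * (∫ x in a..u, g₂ x) -
        (∫ x in a..u, x * g₂ x) * (∫ x in a..u, g₁ x))
      (∫ x in a..b, (b - x) * (g₁ b * g₂ x - g₂ b * g₁ x)) b := by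
  have hderiv {g : ℝ → ℝ} (hg : Continuous g) :=
    (hg.integral_hasStrictDerivAt a b).hasDerivAt
  refine (((hderiv (by fun_prop)).mul (hderiv h₂)).sub
    ((hderiv (by fun_prop)).mul (hderiv h₁))).congr_deriv ?_
  have hint {g : ℝ → ℝ} (hg : Continuous g) : IntervalIntegrable g volume a b :=
    hg.intervalIntegrable a b
  have hsplit : (fun x => (b - x) * (g₁ b * g₂ x - g₂ b * g₁ x)) =
      fun x => g₁ b * (b * g₂ x - x * g₂ x) - g₂ b * (b * g₁ x - x * g₁ x) := by
    ext x; ring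
  rw [hsplit, intervalIntegral.integral_sub, intervalIntegral.integral_const_mul,
    intervalIntegral.integral_const_mul, intervalIntegral.integral_sub,
    intervalIntegral.integral_sub,
    intervalIntegral.integral_const_mul, intervalIntegral.integral_const_mul]
  · ring
  all_goals exact hint (by fun_prop)

/-- The hypothesis says that `g₁` and `g₂` have the same barycentre on every subinterval.
Differentiating it in `b` (`hasDerivAt_cross_moment`) and then in `a` gives
`(b - a) (g₁ b g₂ a - g₂ b g₁ a) = 0`. -/
theorem mul_eq_mul_of_cross_moment_eq (h₁ : Continuous g₁) (h₂ : Continuous g₂)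
    {α β : ℝ} (H : ∀ a ∈ Ioo α β, ∀ b ∈ Ioo α β, a < b →
      (∫ x in a..b, x * g₁ x) * (∫ x in a..b, g₂ x) = (∫ x in a..b, x * g₂ x) * (∫ x in a..b, g₁ x))
    {a b : ℝ} (ha : a ∈ Ioo α β) (hb : b ∈ Ioo α β) : g₁ b * g₂ a = g₂ b * g₁ a := by
  wlog hab : a < b generalizing a b
  · rcases (not_lt.1 hab).eq_or_lt with rfl | hba
    · ring
    · linarith [this hb ha hba]
  set G : ℝ → ℝ := fun x => (b - x) * (g₁ b * g₂ x - g₂ b * g₁ x)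
  have hG : Continuous G := by fun_prop
  have hG_integral : ∀ u ∈ Ioo α b, ∫ x in u..b, G x = 0 := fun u hu => by
    have hzero : (fun v => (∫ x in u..v, x * g₁ x) * (∫ x in u..v, g₂ x) -
        (∫ x in u..v, x * g₂ x) * (∫ x in u..v, g₁ x)) =ᶠ[𝓝 b] fun _ => 0 := by
      filter_upwards [Ioo_mem_nhds hu.2 hb.2] with v hv
      rw [H u ⟨hu.1, hu.2.trans hb.2⟩ v ⟨hu.1.trans hv.1, hv.2⟩ hv.1, sub_self]
    exact ((hasDerivAt_cross_moment h₁ h₂ u b).congr_of_eventuallyEq hzero.symm).unique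
      (hasDerivAt_const b 0)
  have hGa : G a = 0 := by
    have hzero : (fun u => ∫ x in u..b, G x) =ᶠ[𝓝 a] fun _ => 0 := by
      filter_upwards [Ioo_mem_nhds ha.1 hab] with u hu using hG_integral u ⟨hu.1, hu.2⟩
    have := (intervalIntegral.integral_hasDerivAt_left (hG.intervalIntegrable a b)
      (hG.stronglyMeasurableAtFilter _ _) hG.continuousAt).congr_of_eventuallyEq hzero.symm
    exact neg_eq_zero.1 (this.unique (hasDerivAt_const a 0))
  have hba : b - a ≠ 0 := sub_ne_zero.2 hab.ne'
  linear_combination (mul_eq_zero.1 hGa).resolve_left hba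

end Barycenter

theorem mul_eq_mul_of_box_moment_eq {f : ℝ × ℝ → ℝ} (hf : Continuous f)
    {l₁ u₁ l₂ u₂ : ℝ}
    (H : ∀ s ∈ Ioo l₁ u₁, ∀ t ∈ Ioo l₁ u₁, s < t → ∀ a ∈ Ioo l₂ u₂, ∀ b ∈ Ioo l₂ u₂, a < b →
      (∫ x in s..t, ∫ y in a..b, x * y * f (x, y)) * (∫ x in s..t, ∫ y in a..b, f (x, y)) =
        (∫ x in s..t, ∫ y in a..b, x * f (x, y)) * (∫ x in s..t, ∫ y in a..b, y * f (x, y)))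
    {x x' y y' : ℝ} (hx : x ∈ Ioo l₁ u₁) (hx' : x' ∈ Ioo l₁ u₁) (hy : y ∈ Ioo l₂ u₂)
    (hy' : y' ∈ Ioo l₂ u₂) :
    f (x', y') * f (x, y) = f (x, y') * f (x', y) := by
  have hslices (a b : ℝ) (ha : a ∈ Ioo l₂ u₂) (hb : b ∈ Ioo l₂ u₂) (hab : a < b) :
      (∫ y in a..b, y * f (x', y)) * (∫ y in a..b, f (x, y)) =
        (∫ y in a..b, f (x', y)) * (∫ y in a..b, y * f (x, y)) := by
    refine mul_eq_mul_of_cross_moment_eq (g₁ := fun x => ∫ y in a..b, y * f (x, y))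
      (g₂ := fun x => ∫ y in a..b, f (x, y)) (by fun_prop) (by fun_prop)
      (fun s hs t ht hst => ?_) hx hx'
    simpa only [mul_assoc, ← intervalIntegral.integral_const_mul] using
      H s hs t ht hst a ha b hb hab
  have := mul_eq_mul_of_cross_moment_eq (g₁ := fun y => f (x', y)) (g₂ := fun y => f (x, y))
    (by fun_prop) (by fun_prop)
    (fun a ha b hb hab => by linear_combination hslices a b ha hb hab) hy hy'
  linear_combination this

theorem isOpenPosMeasure_withDensity_ofReal {α : Type*} [TopologicalSpace α] [MeasurableSpace α]
    {μ : Measure α} [μ.IsOpenPosMeasure] {f : α → ℝ} (hf : Measurable f) (hf_pos : ∀ x, 0 < f x) :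
    (μ.withDensity fun x => ENNReal.ofReal (f x)).IsOpenPosMeasure :=
  (withDensity_absolutelyContinuous' hf.ennreal_ofReal.aemeasurable
    (ae_of_all _ fun x => (ENNReal.ofReal_pos.2 (hf_pos x)).ne')).isOpenPosMeasure

section Marginals

variable {α β : Type*} [MeasurableSpace α] [MeasurableSpace β] {μ : Measure (α × β)}
  {μ₁ : Measure α} {μ₂ : Measure β} [SFinite μ₂]

theorem nullSingletonClass_fst [NullSingletonClass μ₁] (h : μ ≪ μ₁.prod μ₂) :
    NullSingletonClass μ.fst := by
  refine ⟨fun x => h.map measurable_fst ?_⟩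
  rw [Measure.map_fst_prod, Measure.smul_apply, measure_singleton, smul_zero]

theorem nullSingletonClass_snd [NullSingletonClass μ₂] (h : μ ≪ μ₁.prod μ₂) :
    NullSingletonClass μ.snd := by
  refine ⟨fun y => h.map measurable_snd ?_⟩
  rw [Measure.map_snd_prod, Measure.smul_apply, measure_singleton, smul_zero]

end Marginals

section OpenPos

variable {α β : Type*} [TopologicalSpace α] [MeasurableSpace α] [TopologicalSpace β]
  [MeasurableSpace β] [OpensMeasurableSpace (α × β)] (μ : Measure (α × β)) [μ.IsOpenPosMeasure]

instance isOpenPosMeasure_fst [BorelSpace α] [Nonempty β] : μ.fst.IsOpenPosMeasure :=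
  continuous_fst.isOpenPosMeasure_map Prod.fst_surjective

instance isOpenPosMeasure_snd [BorelSpace β] [Nonempty α] : μ.snd.IsOpenPosMeasure :=
  continuous_snd.isOpenPosMeasure_map Prod.snd_surjective

end OpenPos

section CDF

variable {ν : Measure ℝ} [IsProbabilityMeasure ν]

theorem continuous_cdf [NullSingletonClass ν] : Continuous (cdf ν) := by
  refine continuous_iff_continuousAt.2 fun x => ?_
  rw [(monotone_cdf ν).continuousAt_iff_leftLim_eq_rightLim, (cdf ν).rightLim_eq]
  have hjump := (cdf ν).measure_singleton x
  rw [measure_cdf ν, measure_singleton, eq_comm, ENNReal.ofReal_eq_zero] at hjump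
  exact le_antisymm ((monotone_cdf ν).leftLim_le le_rfl) (sub_nonpos.1 hjump)

theorem strictMono_cdf [ν.IsOpenPosMeasure] : StrictMono (cdf ν) := by
  intro x y hxy
  have hmass := (cdf ν).measure_Ioc x y
  rw [measure_cdf ν] at hmass
  have hpos : 0 < ν (Ioc x y) :=
    (isOpen_Ioo.measure_pos ν (nonempty_Ioo.2 hxy)).trans_le (measure_mono Ioo_subset_Ioc_self)
  rw [hmass, ENNReal.ofReal_pos, sub_pos] at hpos
  exact hpos

theorem cdf_mem_Ioo [ν.IsOpenPosMeasure] (x : ℝ) : cdf ν x ∈ Ioo 0 1 :=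
  ⟨(cdf_nonneg ν (x - 1)).trans_lt (strictMono_cdf (sub_one_lt x)),
    (strictMono_cdf (lt_add_one x)).trans_le (cdf_le_one ν (x + 1))⟩

end CDF

section Quantile

variable {Ω : Type*} [MeasurableSpace Ω] {P : Measure Ω} {X Y : Ω → ℝ}

theorem cdfOf_eq_cdf_map [IsProbabilityMeasure P] (hX : Measurable X) :
    cdfOf P X = cdf (P.map X) := by
  have := Measure.isProbabilityMeasure_map (μ := P) hX.aemeasurable
  ext x
  rw [cdf_eq_real, measureReal_def, Measure.map_apply hX measurableSet_Iic]
  rfl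

theorem quantileSet_cdfOf (hX : (cdfOf P X).Injective) (hY : (cdfOf P Y).Injective)
    (s t a b : ℝ) :
    quantileSet P X Y (cdfOf P X s) (cdfOf P X t) (cdfOf P Y a) (cdfOf P Y b) =
      (fun ω => (X ω, Y ω)) ⁻¹' (Icc s t ×ˢ Icc a b) := by
  simp only [quantileSet, quantileOf, Function.leftInverse_invFun hX _,
    Function.leftInverse_invFun hY _]
  rfl

end Quantile

theorem condCov_eq_zero_iff {Ω : Type*} [MeasurableSpace Ω] {P : Measure Ω}
    {A : Set Ω} (hA : P.real A ≠ 0) (X Y : Ω → ℝ) :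
    condCov P A X Y = 0 ↔
      P.real A * ∫ ω in A, X ω * Y ω ∂P = (∫ ω in A, X ω ∂P) * ∫ ω in A, Y ω ∂P := by
  simp only [condCov, ProbabilityTheory.cond, integral_smul_measure, ENNReal.toReal_inv,
    smul_eq_mul, ← measureReal_def]
  rw [sub_eq_zero]
  field_simp

theorem setIntegral_preimage_eq_setIntegral_mul_density {Ω E : Type*} [MeasurableSpace Ω]
    [MeasurableSpace E] {P : Measure Ω} {μ : Measure E} {Z : Ω → E} (hZ : Measurable Z)
    {f : E → ℝ} (hf : Measurable f) (hf_nonneg : ∀ z, 0 ≤ f z)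
    (hlaw : P.map Z = μ.withDensity fun z => ENNReal.ofReal (f z))
    {s : Set E} (hs : MeasurableSet s) {g : E → ℝ} (hg : Measurable g) :
    ∫ ω in Z ⁻¹' s, g (Z ω) ∂P = ∫ z in s, g z * f z ∂μ := by
  rw [← setIntegral_map hs hg.aestronglyMeasurable hZ.aemeasurable, hlaw,
    setIntegral_withDensity_eq_setIntegral_toReal_smul (by fun_prop)
      (ae_of_all _ fun _ => ENNReal.ofReal_lt_top) _ hs]
  simp only [ENNReal.toReal_ofReal (hf_nonneg _), smul_eq_mul, mul_comm]

theorem setIntegral_Icc_prod_Icc {F : ℝ × ℝ → ℝ} (hF : Continuous F) {s t a b : ℝ}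
    (hst : s ≤ t) (hab : a ≤ b) :
    ∫ z in Icc s t ×ˢ Icc a b, F z = ∫ x in s..t, ∫ y in a..b, F (x, y) := by
  rw [Measure.volume_eq_prod, setIntegral_prod _ ?_, intervalIntegral.integral_of_le hst,
    ← integral_Icc_eq_integral_Ioc]
  · simp only [intervalIntegral.integral_of_le hab, integral_Icc_eq_integral_Ioc]
  · rw [← Measure.volume_eq_prod]
    exact hF.continuousOn.integrableOn_compact (isCompact_Icc.prod isCompact_Icc)

theorem box_moment_eq_of_condCov_eq_zero {Ω : Type*} [MeasurableSpace Ω] {P : Measure Ω}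
    {X Y : Ω → ℝ} (hX : Measurable X) (hY : Measurable Y)
    {f : ℝ × ℝ → ℝ} (hf : Continuous f) (hf_pos : ∀ z, 0 < f z)
    (hlaw : P.map (fun ω => (X ω, Y ω)) = volume.withDensity fun z => ENNReal.ofReal (f z))
    {s t a b : ℝ} (hst : s < t) (hab : a < b)
    (hcov : condCov P ((fun ω => (X ω, Y ω)) ⁻¹' (Icc s t ×ˢ Icc a b)) X Y = 0) :
    (∫ x in s..t, ∫ y in a..b, x * y * f (x, y)) * (∫ x in s..t, ∫ y in a..b, f (x, y)) =
      (∫ x in s..t, ∫ y in a..b, x * f (x, y)) * (∫ x in s..t, ∫ y in a..b, y * f (x, y)) := by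
  have hbox (g : ℝ × ℝ → ℝ) (hg : Continuous g) :
      ∫ ω in (fun ω => (X ω, Y ω)) ⁻¹' (Icc s t ×ˢ Icc a b), g (X ω, Y ω) ∂P =
        ∫ x in s..t, ∫ y in a..b, g (x, y) * f (x, y) := by
    rw [setIntegral_preimage_eq_setIntegral_mul_density (hX.prodMk hY) hf.measurable
      (fun z => (hf_pos z).le) hlaw (measurableSet_Icc.prod measurableSet_Icc) hg.measurable,
      setIntegral_Icc_prod_Icc (by fun_prop) hst.le hab.le]
  have hmass := hbox (fun _ => 1) continuous_const
  simp only [setIntegral_const, smul_eq_mul, mul_one, one_mul] at hmass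
  have hmass_pos : 0 < ∫ x in s..t, ∫ y in a..b, f (x, y) :=
    intervalIntegral.intervalIntegral_pos_of_pos_on
      (Continuous.intervalIntegrable (by fun_prop) _ _)
      (fun x _ => intervalIntegral.intervalIntegral_pos_of_pos_on
        (Continuous.intervalIntegrable (by fun_prop) _ _) (fun y _ => hf_pos _) hab) hst
  rw [condCov_eq_zero_iff (hmass ▸ hmass_pos.ne'), hmass,
    hbox (fun z => z.1 * z.2) (by fun_prop), hbox Prod.fst continuous_fst,
    hbox Prod.snd continuous_snd] at hcov
  linear_combination hcov

theorem indepFun_of_map_eq_withDensity_mul {Ω α β : Type*} [MeasurableSpace Ω]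
    [MeasurableSpace α] [MeasurableSpace β] {P : Measure Ω} [IsProbabilityMeasure P]
    {μ : Measure α} {ν : Measure β} [SFinite ν] {X : Ω → α} {Y : Ω → β}
    (hX : Measurable X) (hY : Measurable Y) {a : α → ℝ≥0∞} {b : β → ℝ≥0∞}
    (ha : Measurable a) (hb : Measurable b)
    (h : P.map (fun ω => (X ω, Y ω)) = (μ.prod ν).withDensity fun z => a z.1 * b z.2) :
    IndepFun X Y P := by
  set μa := μ.withDensity a
  set νb := ν.withDensity b
  have hlaw : P.map (fun ω => (X ω, Y ω)) = μa.prod νb := by rw [h, prod_withDensity ha hb]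
  have hXlaw : P.map X = νb univ • μa := by
    rw [← Measure.map_fst_prod, ← hlaw, Measure.map_map measurable_fst (hX.prodMk hY)]; rfl
  have hYlaw : P.map Y = μa univ • νb := by
    rw [← Measure.map_snd_prod, ← hlaw, Measure.map_map measurable_snd (hX.prodMk hY)]; rfl
  have hmass : μa univ * νb univ = 1 := by
    have := Measure.isProbabilityMeasure_map (μ := P) (hX.prodMk hY).aemeasurable
    rw [← Measure.prod_prod, univ_prod_univ, ← hlaw, measure_univ]
  rw [indepFun_iff_map_prod_eq_prod_map_map hX.aemeasurable hY.aemeasurable, hlaw, hXlaw, hYlaw,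
    Measure.prod_smul_left, Measure.prod_smul_right, smul_smul, mul_comm, hmass, one_smul]

theorem indepFun_of_density_mul_eq_mul {Ω : Type*} [MeasurableSpace Ω] {P : Measure Ω}
    [IsProbabilityMeasure P] {X Y : Ω → ℝ} (hX : Measurable X) (hY : Measurable Y)
    {f : ℝ × ℝ → ℝ} (hf : Measurable f) (hf_pos : ∀ z, 0 < f z)
    (hlaw : P.map (fun ω => (X ω, Y ω)) = volume.withDensity fun z => ENNReal.ofReal (f z))
    (hrule : ∀ x x' y y', f (x', y') * f (x, y) = f (x, y') * f (x', y)) :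
    IndepFun X Y P := by
  refine indepFun_of_map_eq_withDensity_mul (μ := volume) (ν := volume) hX hY
    (a := fun x => ENNReal.ofReal (f (x, 0) / f (0, 0))) (b := fun y => ENNReal.ofReal (f (0, y)))
    (by fun_prop) (by fun_prop) ?_
  rw [hlaw, ← Measure.volume_eq_prod]
  congr with z
  have hz : f z = f (z.1, 0) / f (0, 0) * f (0, z.2) := by
    rw [div_mul_eq_mul_div, eq_div_iff (hf_pos _).ne']
    linear_combination hrule 0 z.1 0 z.2
  rw [hz, ENNReal.ofReal_mul (div_nonneg (hf_pos _).le (hf_pos _).le)]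

/-- Local linear independence implies independence: if around every point `(p,q) ∈ (0,1)²`
there is a neighbourhood of quantile splits on which all conditional covariances vanish,
then `X` and `Y` are independent. -/
theorem indepFun_of_local_condCov_eq_zero
    {Ω : Type*} [MeasurableSpace Ω] (P : Measure Ω) [IsProbabilityMeasure P]
    (X Y : Ω → ℝ) (hX : Measurable X) (hY : Measurable Y)
    (f : ℝ × ℝ → ℝ) (hf_cont : Continuous f) (hf_pos : ∀ p, 0 < f p)
    (hf_law : Measure.map (fun ω => (X ω, Y ω)) P =
      (volume : Measure (ℝ × ℝ)).withDensity (fun p => ENNReal.ofReal (f p)))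
    (hloc : ∀ p q : ℝ, p ∈ Ioo (0 : ℝ) 1 → q ∈ Ioo (0 : ℝ) 1 → ∃ ε > (0 : ℝ),
      ∀ p₁ q₁ p₂ q₂ : ℝ,
        p₁ ∈ Ioo (p - ε) (p + ε) ∩ Ioo (0 : ℝ) 1 → q₁ ∈ Ioo (p - ε) (p + ε) ∩ Ioo (0 : ℝ) 1 →
        p₁ < q₁ →
        p₂ ∈ Ioo (q - ε) (q + ε) ∩ Ioo (0 : ℝ) 1 → q₂ ∈ Ioo (q - ε) (q + ε) ∩ Ioo (0 : ℝ) 1 →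
        p₂ < q₂ →
        condCov P (quantileSet P X Y p₁ q₁ p₂ q₂) X Y = 0) :
    IndepFun X Y P := by
  set μ := P.map fun ω => (X ω, Y ω)
  have : IsProbabilityMeasure μ := Measure.isProbabilityMeasure_map (hX.prodMk hY).aemeasurable
  have : μ.IsOpenPosMeasure :=
    hf_law ▸ isOpenPosMeasure_withDensity_ofReal hf_cont.measurable hf_pos
  have hμ_ac : μ ≪ volume.prod volume := by
    rw [hf_law, ← Measure.volume_eq_prod]; exact withDensity_absolutelyContinuous _ _
  have : NullSingletonClass μ.fst := nullSingletonClass_fst hμ_ac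
  have : NullSingletonClass μ.snd := nullSingletonClass_snd hμ_ac
  have hFX : cdfOf P X = cdf μ.fst := by rw [Measure.fst_map_prodMk hY, cdfOf_eq_cdf_map hX]
  have hFY : cdfOf P Y = cdf μ.snd := by rw [Measure.snd_map_prodMk hX, cdfOf_eq_cdf_map hY]
  refine indepFun_of_density_mul_eq_mul hX hY hf_cont.measurable hf_pos hf_law
    (mul_eq_mul_of_locally hf_pos fun x₀ y₀ => ?_)
  obtain ⟨ε, hε, hcov⟩ := hloc _ _ (hFX ▸ cdf_mem_Ioo x₀) (hFY ▸ cdf_mem_Ioo y₀)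
  have hball {F : ℝ → ℝ} (hF : Continuous F) (z : ℝ) : F ⁻¹' Ioo (F z - ε) (F z + ε) ∈ 𝓝 z :=
    hF.continuousAt.preimage_mem_nhds (Ioo_mem_nhds (sub_lt_self _ hε) (lt_add_of_pos_right _ hε))
  obtain ⟨l₁, u₁, hx₀, hU⟩ := mem_nhds_iff_exists_Ioo_subset.1 (hball (hFX ▸ continuous_cdf) x₀)
  obtain ⟨l₂, u₂, hy₀, hV⟩ := mem_nhds_iff_exists_Ioo_subset.1 (hball (hFY ▸ continuous_cdf) y₀)
  refine ⟨_, Ioo_mem_nhds hx₀.1 hx₀.2, _, Ioo_mem_nhds hy₀.1 hy₀.2,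
    fun x hx x' hx' y hy y' hy' => mul_eq_mul_of_box_moment_eq hf_cont
      (fun s hs t ht hst a ha b hb hab => ?_) hx hx' hy hy'⟩
  refine box_moment_eq_of_condCov_eq_zero hX hY hf_cont hf_pos hf_law hst hab ?_
  rw [← quantileSet_cdfOf (hFX ▸ strictMono_cdf.injective) (hFY ▸ strictMono_cdf.injective)]
  exact hcov _ _ _ _ ⟨hU hs, hFX ▸ cdf_mem_Ioo s⟩ ⟨hU ht, hFX ▸ cdf_mem_Ioo t⟩
    (hFX ▸ strictMono_cdf hst) ⟨hV ha, hFY ▸ cdf_mem_Ioo a⟩ ⟨hV hb, hFY ▸ cdf_mem_Ioo b⟩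
    (hFY ▸ strictMono_cdf hab)
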